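/- For every integer s ≥ 0, the space (ℙ_s)³ of ℝ³-valued polynomial vector fields of degree ≤ s decomposes as the direct sum of curl((ℙ_{s+1})³) and x·ℙ_{s-1} := {x ↦ p(x)·x : p ∈ ℙ_{s-1}}, where ℙ_{-1} = {0}. -/

import Mathlib

open MvPolynomial

noncomputable section

abbrev P3 := MvPolynomial (Fin 3) ℝ

/-- `ℙ_n`, polynomials of total degree ≤ n, with `ℙ_n = {0}` for `n < 0`. -/
def Pdeg3 (n : ℤ) : Submodule ℝ P3 :=
  if n < 0 then ⊥ else restrictTotalDegree (Fin 3) ℝ n.toNat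

/-- `(ℙ_n)³`. -/
def Ps3vec (n : ℤ) : Submodule ℝ (Fin 3 → P3) :=
  Submodule.pi Set.univ (fun _ => Pdeg3 n)

def pd3 (i : Fin 3) : P3 →ₗ[ℝ] P3 := (pderiv i : Derivation ℝ P3 P3).toLinearMap

def pr3 (i : Fin 3) : (Fin 3 → P3) →ₗ[ℝ] P3 := LinearMap.proj i

/-- The curl operator on polynomial vector fields, as a linear map. -/
def curlLM : (Fin 3 → P3) →ₗ[ℝ] (Fin 3 → P3) :=
  LinearMap.pi ![pd3 1 ∘ₗ pr3 2 - pd3 2 ∘ₗ pr3 1,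
                 pd3 2 ∘ₗ pr3 0 - pd3 0 ∘ₗ pr3 2,
                 pd3 0 ∘ₗ pr3 1 - pd3 1 ∘ₗ pr3 0]

/-- `p ↦ (x ↦ p(x)·x)` as a linear map. -/
def xMulLM : P3 →ₗ[ℝ] (Fin 3 → P3) :=
  LinearMap.pi (fun i => LinearMap.mulLeft ℝ (X i))

/-!
Write `E = ∑ xᵢ ∂ᵢ` for the Euler operator, which multiplies a monomial by its degree; hence
`E + c` is invertible for `c > 0` and preserves degrees. Since `div (x p) = (E + 3) p` and
`div ∘ curl = 0`, a field `curl v = x p` forces `p = 0`. Conversely, the identity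
`curl (x × u) = x div u - (E + 2) u`, together with `∂ᵢ (E + c) = (E + c + 1) ∂ᵢ` and
`(E + c) (xᵢ p) = xᵢ (E + c + 1) p`, shows `u = curl v + x p` for
`v = -(E + 1)⁻¹ (x × u) ∈ (ℙ_{s+1})³` and `p = (E + 3)⁻¹ div u ∈ ℙ_{s-1}`.
-/

namespace MvPolynomial

section ScaleByDegree

variable {σ R : Type*} [CommSemiring R]

theorem coeff_sum_support_monomial_mul (w : (σ →₀ ℕ) → R) (p : MvPolynomial σ R) (m : σ →₀ ℕ) :
    coeff m (∑ n ∈ p.support, monomial n (w n * coeff n p)) = w m * coeff m p := by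
  classical
  rw [coeff_sum, Finset.sum_eq_single m (fun n _ hn => by simp [coeff_monomial, hn])
    (fun hm => by simp [notMem_support_iff.1 hm])]
  simp

/-- `scaleByDegree (fun n => n + c)` is the shifted Euler operator `∑ i, X i * ∂ᵢ + c`, and
`scaleByDegree (fun n => (n + c)⁻¹)` is its inverse for `c > 0` in characteristic zero. -/
def scaleByDegree (w : ℕ → R) : MvPolynomial σ R →ₗ[R] MvPolynomial σ R where
  toFun p := ∑ m ∈ p.support, monomial m (w m.degree * coeff m p)
  map_add' p q := by
    ext m
    rw [coeff_add, coeff_sum_support_monomial_mul, coeff_sum_support_monomial_mul,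
      coeff_sum_support_monomial_mul, coeff_add, mul_add]
  map_smul' c p := by
    ext m
    rw [coeff_smul, coeff_sum_support_monomial_mul, coeff_sum_support_monomial_mul, coeff_smul,
      smul_eq_mul, smul_eq_mul, RingHom.id_apply, mul_left_comm]

@[simp]
theorem coeff_scaleByDegree (w : ℕ → R) (p : MvPolynomial σ R) (m : σ →₀ ℕ) :
    coeff m (scaleByDegree w p) = w m.degree * coeff m p :=
  coeff_sum_support_monomial_mul _ p m

@[simp]
theorem scaleByDegree_monomial (w : ℕ → R) (m : σ →₀ ℕ) (a : R) :
    scaleByDegree w (monomial m a) = monomial m (w m.degree * a) := by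
  classical
  ext n
  simp only [coeff_scaleByDegree, coeff_monomial]
  split_ifs with h <;> simp [h]

theorem support_scaleByDegree_subset (w : ℕ → R) (p : MvPolynomial σ R) :
    (scaleByDegree w p).support ⊆ p.support := fun m hm => by
  rw [mem_support_iff, coeff_scaleByDegree] at hm
  exact mem_support_iff.2 (right_ne_zero_of_mul hm)

theorem pderiv_scaleByDegree (w : ℕ → R) (i : σ) (p : MvPolynomial σ R) :
    pderiv i (scaleByDegree w p) = scaleByDegree (fun n => w (n + 1)) (pderiv i p) := by
  ext m
  simp [coeff_pderiv, mul_assoc]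

theorem scaleByDegree_X_mul (w : ℕ → R) (i : σ) (p : MvPolynomial σ R) :
    scaleByDegree w (X i * p) = X i * scaleByDegree (fun n => w (n + 1)) p := by
  induction p using MvPolynomial.induction_on' with
  | add p q hp hq => simp [mul_add, hp, hq]
  | monomial n a => simp [X, monomial_mul, add_comm]

theorem scaleByDegree_eq_zero_iff [NoZeroDivisors R] {w : ℕ → R} (hw : ∀ n, w n ≠ 0)
    {p : MvPolynomial σ R} : scaleByDegree w p = 0 ↔ p = 0 := by
  refine ⟨fun h => ?_, by rintro rfl; exact map_zero _⟩
  ext m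
  simpa [hw] using congr(coeff m $h)

theorem sum_X_mul_pderiv [Fintype σ] (p : MvPolynomial σ R) :
    ∑ i, X i * pderiv i p = scaleByDegree (fun n => (n : R)) p := by
  induction p using MvPolynomial.induction_on' with
  | add p q hp hq => simp [mul_add, Finset.sum_add_distrib, hp, hq]
  | monomial n a =>
    rw [(isHomogeneous_monomial (n := n.degree) a rfl).sum_X_mul_pderiv, scaleByDegree_monomial,
      smul_monomial, nsmul_eq_mul]

theorem scaleByDegree_natCast_add [Fintype σ] (c : R) (p : MvPolynomial σ R) :
    scaleByDegree (fun n => (n : R) + c) p = ∑ i, X i * pderiv i p + c • p := by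
  rw [sum_X_mul_pderiv]
  ext m
  simp [add_mul]

end ScaleByDegree

section Divergence

variable {σ R : Type*} [CommSemiring R]

theorem pderiv_pderiv_comm (i j : σ) (p : MvPolynomial σ R) :
    pderiv i (pderiv j p) = pderiv j (pderiv i p) := by
  obtain rfl | hij := eq_or_ne i j
  · rfl
  ext m
  simp [coeff_pderiv, hij, hij.symm, add_right_comm m]
  ring

theorem add_single_mem_support_of_mem_support_pderiv {i : σ} {p : MvPolynomial σ R}
    {m : σ →₀ ℕ} (hm : m ∈ (pderiv i p).support) : m + Finsupp.single i 1 ∈ p.support := by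
  rw [mem_support_iff, coeff_pderiv] at hm
  exact mem_support_iff.2 (left_ne_zero_of_mul hm)

variable [Fintype σ]

def divergence (u : σ → MvPolynomial σ R) : MvPolynomial σ R :=
  ∑ i, pderiv i (u i)

theorem divergence_X_mul (p : MvPolynomial σ R) :
    divergence (fun i => X i * p) = scaleByDegree (fun n => (n : R) + Fintype.card σ) p := by
  simp only [divergence, pderiv_mul, pderiv_X_self, one_mul, Finset.sum_add_distrib,
    Finset.sum_const, Finset.card_univ, scaleByDegree_natCast_add, add_comm, Nat.cast_smul_eq_nsmul]

end Divergence

end MvPolynomial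

open Matrix

theorem mem_Pdeg3_iff {n : ℤ} {f : P3} : f ∈ Pdeg3 n ↔ ∀ m ∈ f.support, (m.degree : ℤ) ≤ n := by
  unfold Pdeg3
  split_ifs with hn
  · rw [Submodule.mem_bot, ← support_eq_empty, Finset.eq_empty_iff_forall_notMem]
    refine forall_congr' fun m => ⟨fun h hm => absurd hm h, fun h hm => ?_⟩
    have := h hm
    omega
  · rw [mem_restrictTotalDegree, totalDegree, Finset.sup_le_iff]
    refine forall₂_congr fun m _ => ?_
    change m.degree ≤ n.toNat ↔ _
    omega

theorem mem_Ps3vec_iff {n : ℤ} {u : Fin 3 → P3} : u ∈ Ps3vec n ↔ ∀ i, u i ∈ Pdeg3 n := by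
  simp [Ps3vec, Submodule.mem_pi]

theorem curlLM_apply (v : Fin 3 → P3) :
    curlLM v = ![pderiv 1 (v 2) - pderiv 2 (v 1), pderiv 2 (v 0) - pderiv 0 (v 2),
      pderiv 0 (v 1) - pderiv 1 (v 0)] := by
  funext i
  fin_cases i <;> simp [curlLM, pd3, pr3]

theorem xMulLM_apply (p : P3) : xMulLM p = fun i => X i * p := by
  funext i
  simp [xMulLM]

section Degree

variable {n : ℤ} {f : P3}

theorem pderiv_mem_Pdeg3 (i : Fin 3) (hf : f ∈ Pdeg3 n) : pderiv i f ∈ Pdeg3 (n - 1) := by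
  rw [mem_Pdeg3_iff] at hf ⊢
  intro m hm
  have := hf _ (add_single_mem_support_of_mem_support_pderiv hm)
  rw [map_add, Finsupp.degree_single] at this
  omega

theorem X_mul_mem_Pdeg3 (i : Fin 3) (hf : f ∈ Pdeg3 n) : X i * f ∈ Pdeg3 (n + 1) := by
  rw [mem_Pdeg3_iff] at hf ⊢
  simp only [support_X_mul, Finset.mem_map, addLeftEmbedding_apply, forall_exists_index, and_imp]
  rintro _ m hm rfl
  rw [map_add, Finsupp.degree_single]
  have := hf m hm
  omega

theorem scaleByDegree_mem_Pdeg3 (w : ℕ → ℝ) (hf : f ∈ Pdeg3 n) : scaleByDegree w f ∈ Pdeg3 n := by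
  rw [mem_Pdeg3_iff] at hf ⊢
  exact fun m hm => hf m (support_scaleByDegree_subset w f hm)

theorem curlLM_mem_Ps3vec {v : Fin 3 → P3} (hv : v ∈ Ps3vec (n + 1)) : curlLM v ∈ Ps3vec n := by
  rw [mem_Ps3vec_iff] at hv ⊢
  have h (a b c d : Fin 3) : pderiv a (v b) - pderiv c (v d) ∈ Pdeg3 n := by
    simpa using sub_mem (pderiv_mem_Pdeg3 a (hv b)) (pderiv_mem_Pdeg3 c (hv d))
  intro i
  rw [curlLM_apply]
  fin_cases i <;> apply h

theorem X_cross_mem_Ps3vec {u : Fin 3 → P3} (hu : u ∈ Ps3vec n) :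
    (fun i => X i) ⨯₃ u ∈ Ps3vec (n + 1) := by
  rw [mem_Ps3vec_iff] at hu ⊢
  have h (a b c d : Fin 3) : X a * u b - X c * u d ∈ Pdeg3 (n + 1) :=
    sub_mem (X_mul_mem_Pdeg3 a (hu b)) (X_mul_mem_Pdeg3 c (hu d))
  intro i
  rw [cross_apply]
  fin_cases i <;> apply h

theorem xMulLM_mem_Ps3vec {p : P3} (hp : p ∈ Pdeg3 (n - 1)) : xMulLM p ∈ Ps3vec n := by
  rw [mem_Ps3vec_iff, xMulLM_apply]
  intro i
  simpa using X_mul_mem_Pdeg3 i hp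

theorem divergence_mem_Pdeg3 {u : Fin 3 → P3} (hu : u ∈ Ps3vec n) :
    divergence u ∈ Pdeg3 (n - 1) :=
  Submodule.sum_mem _ fun i _ => pderiv_mem_Pdeg3 i (mem_Ps3vec_iff.1 hu i)

theorem scaleByDegree_comp_mem_Ps3vec (w : ℕ → ℝ) {u : Fin 3 → P3} (hu : u ∈ Ps3vec n) :
    scaleByDegree w ∘ u ∈ Ps3vec n :=
  mem_Ps3vec_iff.2 fun i => scaleByDegree_mem_Pdeg3 w (mem_Ps3vec_iff.1 hu i)

end Degree

theorem curlLM_comp_scaleByDegree (w : ℕ → ℝ) (v : Fin 3 → P3) :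
    curlLM (scaleByDegree w ∘ v) = scaleByDegree (fun n => w (n + 1)) ∘ curlLM v := by
  funext i
  fin_cases i <;> simp [curlLM_apply, pderiv_scaleByDegree]

theorem divergence_curlLM (v : Fin 3 → P3) : divergence (curlLM v) = 0 := by
  simp only [divergence, curlLM_apply, Fin.sum_univ_three, cons_val_zero, cons_val_one,
    cons_val, map_sub]
  rw [pderiv_pderiv_comm 0 1 (v 2), pderiv_pderiv_comm 0 2 (v 1), pderiv_pderiv_comm 1 2 (v 0)]
  ring

theorem divergence_xMulLM (p : P3) :
    divergence (xMulLM p) = scaleByDegree (fun n => (n : ℝ) + 3) p := by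
  simpa [xMulLM_apply] using divergence_X_mul p

theorem curlLM_X_cross (u : Fin 3 → P3) :
    curlLM ((fun i => X i) ⨯₃ u) =
      fun i => X i * divergence u - scaleByDegree (fun n => (n : ℝ) + 2) (u i) := by
  funext i
  simp only [scaleByDegree_natCast_add, divergence, Fin.sum_univ_three]
  fin_cases i <;> simp [curlLM_apply, cross_apply, smul_eq_C_mul, map_ofNat] <;> ring

theorem curlLM_add_xMulLM_eq (u : Fin 3 → P3) :
    curlLM (-(scaleByDegree (fun n => ((n : ℝ) + 1)⁻¹) ∘ ((fun i => X i) ⨯₃ u))) +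
      xMulLM (scaleByDegree (fun n => ((n : ℝ) + 3)⁻¹) (divergence u)) = u := by
  rw [map_neg, curlLM_comp_scaleByDegree, curlLM_X_cross, xMulLM_apply]
  funext i
  have hX : X i * scaleByDegree (fun n => ((n : ℝ) + 3)⁻¹) (divergence u) =
      scaleByDegree (fun n => ((n : ℝ) + 2)⁻¹) (X i * divergence u) := by
    rw [scaleByDegree_X_mul]
    congr
    funext n
    push_cast
    ring
  simp only [Pi.add_apply, Pi.neg_apply, Function.comp_apply, hX]
  ext m
  simp only [coeff_add, coeff_neg, coeff_sub, coeff_scaleByDegree]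
  push_cast
  field_simp
  ring

theorem range_curlLM_inf_range_xMulLM :
    LinearMap.range curlLM ⊓ LinearMap.range xMulLM = ⊥ := by
  rw [eq_bot_iff]
  rintro _ ⟨⟨v, rfl⟩, ⟨p, hp⟩⟩
  have hp0 : scaleByDegree (fun n => (n : ℝ) + 3) p = 0 := by
    rw [← divergence_xMulLM, hp, divergence_curlLM]
  rw [scaleByDegree_eq_zero_iff (fun n => by positivity)] at hp0
  rw [Submodule.mem_bot, ← hp, hp0, map_zero]

/-- `(ℙ_s)³ = curl((ℙ_{s+1})³) ⊕ x·ℙ_{s-1}` (internal direct sum). -/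
theorem stmt4 (s : ℕ) :
    (Submodule.map curlLM (Ps3vec (s + 1))) ⊓ (Submodule.map xMulLM (Pdeg3 (s - 1))) = ⊥ ∧
    (Submodule.map curlLM (Ps3vec (s + 1))) ⊔ (Submodule.map xMulLM (Pdeg3 (s - 1))) =
      Ps3vec s := by
  refine ⟨eq_bot_iff.2 ?_, le_antisymm (sup_le ?_ ?_) fun u hu => ?_⟩
  · rw [← range_curlLM_inf_range_xMulLM]
    exact inf_le_inf LinearMap.map_le_range LinearMap.map_le_range
  · rintro _ ⟨v, hv, rfl⟩
    exact curlLM_mem_Ps3vec hv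
  · rintro _ ⟨p, hp, rfl⟩
    exact xMulLM_mem_Ps3vec hp
  · rw [← curlLM_add_xMulLM_eq u]
    exact Submodule.add_mem_sup
      (Submodule.mem_map_of_mem (neg_mem (scaleByDegree_comp_mem_Ps3vec _ (X_cross_mem_Ps3vec hu))))
      (Submodule.mem_map_of_mem (scaleByDegree_mem_Pdeg3 _ (divergence_mem_Pdeg3 hu)))
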